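/- Let G be a finite group with subgroups A, B, M satisfying conditions (1)–(4) of the soft plane construction. Then AM ∩ BM = M. -/

import Mathlib

open scoped Pointwise

/-!
Since `G = AMB` and `B ≤ BM`, we have `AM * BM = G`, so the product formula gives
`|AM ∩ BM| = |AM| |BM| / |G| = n k = |M|`; as `M ≤ AM ∩ BM`, the two coincide.
-/

namespace Subgroup

variable {G : Type*} [Group G]

lemma left_le_of_coe_eq_mul {H K L : Subgroup G} (h : (L : Set G) = H * K) : H ≤ L := fun x hx =>
  show x ∈ (L : Set G) from h ▸ Set.subset_mul_left (H : Set G) K.one_mem hx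

lemma right_le_of_coe_eq_mul {H K L : Subgroup G} (h : (L : Set G) = H * K) : K ≤ L := fun x hx =>
  show x ∈ (L : Set G) from h ▸ Set.subset_mul_right (K : Set G) H.one_mem hx

lemma card_inf_mul_card_le_of_mul_eq_univ [Finite G] {H K : Subgroup G}
    (hHK : (H : Set G) * (K : Set G) = Set.univ) :
    Nat.card ↥(H ⊓ K) * Nat.card G ≤ Nat.card H * Nat.card K := by
  have hdecomp : ∀ g : G, ∃ x ∈ H, ∃ y ∈ K, x * y = g := fun g =>
    Set.mem_mul.1 (hHK ▸ Set.mem_univ g)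
  choose x hx y hy hxy using hdecomp
  let f : ↥(H ⊓ K) × G → H × K := fun p =>
    (⟨x p.2 * p.1, mul_mem (hx p.2) p.1.2.1⟩,
      ⟨(p.1 : G)⁻¹ * y p.2, mul_mem (inv_mem p.1.2.2) (hy p.2)⟩)
  have hf : Function.Injective f := by
    rintro ⟨z, g⟩ ⟨z', g'⟩ hfeq
    simp only [f, Prod.mk.injEq, Subtype.mk.injEq] at hfeq
    obtain ⟨h₁, h₂⟩ := hfeq
    have hg : g = g' := by
      calc g = x g * y g := (hxy g).symm
        _ = x g * z * ((z : G)⁻¹ * y g) := by group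
        _ = x g' * z' * ((z' : G)⁻¹ * y g') := by rw [h₁, h₂]
        _ = x g' * y g' := by group
        _ = g' := hxy g'
    subst hg
    rw [Subtype.ext (mul_left_cancel h₁)]
  simpa only [Nat.card_prod] using Nat.card_le_card_of_injective f hf

end Subgroup

theorem stmt6_general {G : Type*} [Group G] [Finite G]
    (A B M AM BM : Subgroup G) (n k : ℕ)
    (hM : Nat.card M = n * k)
    (hG : Nat.card G = n ^ 3 * k)
    (hAM : (AM : Set G) = (A : Set G) * (M : Set G))
    (hBM : (BM : Set G) = (B : Set G) * (M : Set G))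
    (hAMcard : Nat.card AM = n ^ 2 * k) (hBMcard : Nat.card BM = n ^ 2 * k)
    (h3 : ∀ g : G, ∃ a ∈ A, ∃ m ∈ M, ∃ b ∈ B, g = a * m * b) :
    AM ⊓ BM = M := by
  have hMle : M ≤ AM ⊓ BM :=
    le_inf (Subgroup.right_le_of_coe_eq_mul hAM) (Subgroup.right_le_of_coe_eq_mul hBM)
  have hmul : (AM : Set G) * (BM : Set G) = Set.univ := by
    refine Set.eq_univ_of_forall fun g => ?_
    obtain ⟨a, ha, m, hm, b, hb, rfl⟩ := h3 g
    exact Set.mul_mem_mul (hAM ▸ Set.mul_mem_mul ha hm) (Subgroup.left_le_of_coe_eq_mul hBM hb)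
  have hcard := Subgroup.card_inf_mul_card_le_of_mul_eq_univ hmul
  have hGpos : 0 < n ^ 3 * k := hG ▸ Nat.card_pos
  rw [hG, hAMcard, hBMcard, show n ^ 2 * k * (n ^ 2 * k) = n * k * (n ^ 3 * k) by ring] at hcard
  exact (Subgroup.eq_of_le_of_card_ge hMle (hM ▸ Nat.le_of_mul_le_mul_right hcard hGpos)).symm

/-- Under conditions (1)–(4), `AM ∩ BM = M`. -/
theorem stmt6 {G : Type*} [Group G] [Finite G]
    (A B M AM BM : Subgroup G) (n k : ℕ) (hn : 1 < n)
    (hk : k = Nat.card (A ⊓ B : Subgroup G))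
    (hA : Nat.card A = n * k) (hB : Nat.card B = n * k) (hM : Nat.card M = n * k)
    (hG : Nat.card G = n ^ 3 * k)
    (hAM : (AM : Set G) = (A : Set G) * (M : Set G))
    (hBM : (BM : Set G) = (B : Set G) * (M : Set G))
    (hAMcard : Nat.card AM = n ^ 2 * k) (hBMcard : Nat.card BM = n ^ 2 * k)
    (h3 : ∀ g : G, ∃ a ∈ A, ∃ m ∈ M, ∃ b ∈ B, g = a * m * b)
    (h4 : ((A : Set G) * (B : Set G)) ∩ ((B : Set G) * (A : Set G)) =
      (A : Set G) ∪ (B : Set G)) :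
    AM ⊓ BM = M :=
  stmt6_general A B M AM BM n k hM hG hAM hBM hAMcard hBMcard h3
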